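/- Let f : ℝ³ → [0,∞) be measurable with ‖f‖_{L^q} ≥ c > 0 and ‖f‖_{L¹}, ‖f‖_{L²} ≤ A for some 1 < q < 2. Then there exist ε, δ > 0 depending only on c, A, q such that the Lebesgue measure of the set {p : f(p) > ε} is at least δ. -/

import Mathlib

/-!
Split the range of `t = |f|` at two levels `ε` and `M`: for `0 < p < q < r`,
`t ^ q ≤ ε ^ (q - p) * t ^ p + M ^ q * 1{t > ε} + M ^ (q - r) * t ^ r`.
Integrating, the `L^q` mass `c ^ q` is bounded by `ε ^ (q - p) * A ^ p + M ^ q * μ {|f| > ε} +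
M ^ (q - r) * B ^ r`. Taking `ε` small and `M` large so that the two outer terms are each at most
`c ^ q / 4` leaves `μ {|f| > ε} ≥ c ^ q / (2 * M ^ q)`.
-/

open MeasureTheory

open scoped ENNReal

theorem Real.rpow_le_three_regimes {p q r ε M t : ℝ} (hp : 0 < p) (hpq : p < q) (hqr : q < r)
    (hε : 0 < ε) (hM : 0 < M) (ht : 0 ≤ t) :
    t ^ q ≤ ε ^ (q - p) * t ^ p + (Set.Ioi ε).indicator (fun _ ↦ M ^ q) t
      + M ^ (q - r) * t ^ r := by
  have hmid : 0 ≤ (Set.Ioi ε).indicator (fun _ ↦ M ^ q) t :=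
    Set.indicator_nonneg (fun _ _ ↦ by positivity) t
  have hlow : 0 ≤ ε ^ (q - p) * t ^ p := by positivity
  have hhigh : 0 ≤ M ^ (q - r) * t ^ r := by positivity
  rcases le_or_gt t ε with htε | hεt
  · suffices t ^ q ≤ ε ^ (q - p) * t ^ p by linarith
    rcases ht.eq_or_lt with rfl | htpos
    · rw [Real.zero_rpow (by linarith)]
      exact hlow
    calc t ^ q = t ^ (q - p) * t ^ p := by rw [← Real.rpow_add htpos, sub_add_cancel]
      _ ≤ ε ^ (q - p) * t ^ p := by gcongr
  have htpos : 0 < t := hε.trans hεt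
  rcases le_or_gt t M with htM | hMt
  · have : (Set.Ioi ε).indicator (fun _ ↦ M ^ q) t = M ^ q := Set.indicator_of_mem hεt _
    have : t ^ q ≤ M ^ q := by gcongr; linarith
    linarith
  · suffices t ^ q ≤ M ^ (q - r) * t ^ r by linarith
    calc t ^ q = t ^ (q - r) * t ^ r := by rw [← Real.rpow_add htpos, sub_add_cancel]
      _ ≤ M ^ (q - r) * t ^ r :=
        mul_le_mul_of_nonneg_right (Real.rpow_le_rpow_of_nonpos hM hMt.le (by linarith))
          (by positivity)

theorem ENNReal.rpow_le_three_regimes {p q r ε M : ℝ} (hp : 0 < p) (hpq : p < q) (hqr : q < r)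
    (hε : 0 < ε) (hM : 0 < M) (t : ℝ≥0∞) :
    t ^ q ≤ ENNReal.ofReal (ε ^ (q - p)) * t ^ p
      + (Set.Ioi (ENNReal.ofReal ε)).indicator (fun _ ↦ ENNReal.ofReal (M ^ q)) t
      + ENNReal.ofReal (M ^ (q - r)) * t ^ r := by
  rcases eq_or_ne t ⊤ with rfl | ht
  · have : ENNReal.ofReal (ε ^ (q - p)) ≠ 0 := by
      rw [ENNReal.ofReal_ne_zero_iff]; positivity
    simp [ENNReal.top_rpow_of_pos hp, ENNReal.mul_top this]
  obtain ⟨s, hs, rfl⟩ : ∃ s, 0 ≤ s ∧ t = ENNReal.ofReal s :=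
    ⟨t.toReal, ENNReal.toReal_nonneg, (ENNReal.ofReal_toReal ht).symm⟩
  have hind : (Set.Ioi (ENNReal.ofReal ε)).indicator (fun _ ↦ ENNReal.ofReal (M ^ q))
      (ENNReal.ofReal s) = ENNReal.ofReal ((Set.Ioi ε).indicator (fun _ ↦ M ^ q) s) := by
    by_cases hεs : ε < s
    · simp [hεs, hε.trans hεs]
    · simp [hεs, ENNReal.ofReal_lt_ofReal_iff']
  have hlow : 0 ≤ ε ^ (q - p) := by positivity
  have hhigh : 0 ≤ M ^ (q - r) := by positivity
  rw [hind, ENNReal.ofReal_rpow_of_nonneg hs (by linarith),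
    ENNReal.ofReal_rpow_of_nonneg hs hp.le, ENNReal.ofReal_rpow_of_nonneg hs (by linarith),
    ← ENNReal.ofReal_mul hlow, ← ENNReal.ofReal_mul hhigh]
  exact (ENNReal.ofReal_le_ofReal (Real.rpow_le_three_regimes hp hpq hqr hε hM hs)).trans
    (ENNReal.ofReal_add_le.trans (add_le_add_left ENNReal.ofReal_add_le _))

variable {α : Type*} [MeasurableSpace α] {μ : Measure α}

theorem lintegral_rpow_le_three_regimes {p q r ε M : ℝ} (hp : 0 < p) (hpq : p < q)
    (hqr : q < r) (hε : 0 < ε) (hM : 0 < M) {g : α → ℝ≥0∞} (hg : AEMeasurable g μ) :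
    ∫⁻ x, g x ^ q ∂μ ≤ ENNReal.ofReal (ε ^ (q - p)) * ∫⁻ x, g x ^ p ∂μ
      + ENNReal.ofReal (M ^ q) * μ {x | ENNReal.ofReal ε < g x}
      + ENNReal.ofReal (M ^ (q - r)) * ∫⁻ x, g x ^ r ∂μ := by
  have hS : NullMeasurableSet {x | ENNReal.ofReal ε < g x} μ :=
    nullMeasurableSet_lt aemeasurable_const hg
  calc ∫⁻ x, g x ^ q ∂μ
      ≤ ∫⁻ x, (ENNReal.ofReal (ε ^ (q - p)) * g x ^ p
          + {x | ENNReal.ofReal ε < g x}.indicator (fun _ ↦ ENNReal.ofReal (M ^ q)) x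
          + ENNReal.ofReal (M ^ (q - r)) * g x ^ r) ∂μ :=
        lintegral_mono fun x ↦ ENNReal.rpow_le_three_regimes hp hpq hqr hε hM (g x)
    _ = _ := by
        rw [lintegral_add_right' _ ((hg.pow_const r).const_mul _),
          lintegral_add_right' _ (aemeasurable_const.indicator₀ hS),
          lintegral_const_mul'' _ (hg.pow_const p), lintegral_const_mul'' _ (hg.pow_const r),
          lintegral_indicator_const₀ hS]

section eLpNorm

variable {E : Type*} [ENorm E] {f : α → E} {p : ℝ}

theorem le_lintegral_enorm_rpow_of_le_eLpNorm (hp : 0 < p) {c : ℝ} (hc : 0 ≤ c)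
    (h : ENNReal.ofReal c ≤ eLpNorm f (ENNReal.ofReal p) μ) :
    ENNReal.ofReal (c ^ p) ≤ ∫⁻ x, ‖f x‖ₑ ^ p ∂μ := by
  rwa [eLpNorm_eq_lintegral_rpow_enorm_toReal (by simpa using hp) ENNReal.ofReal_ne_top,
    ENNReal.toReal_ofReal hp.le, one_div, ENNReal.le_rpow_inv_iff hp,
    ENNReal.ofReal_rpow_of_nonneg hc hp.le] at h

theorem lintegral_enorm_rpow_le_of_eLpNorm_le (hp : 0 < p) {A : ℝ} (hA : 0 ≤ A)
    (h : eLpNorm f (ENNReal.ofReal p) μ ≤ ENNReal.ofReal A) :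
    ∫⁻ x, ‖f x‖ₑ ^ p ∂μ ≤ ENNReal.ofReal (A ^ p) := by
  rwa [eLpNorm_eq_lintegral_rpow_enorm_toReal (by simpa using hp) ENNReal.ofReal_ne_top,
    ENNReal.toReal_ofReal hp.le, one_div, ENNReal.rpow_inv_le_iff hp,
    ENNReal.ofReal_rpow_of_nonneg hA hp.le] at h

end eLpNorm

theorem exists_pos_le_measure_lt_enorm {E : Type*} [TopologicalSpace E] [ContinuousENorm E]
    {p q r c A B : ℝ} (hp : 0 < p) (hpq : p < q) (hqr : q < r) (hc : 0 < c) (hA : 0 < A)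
    (hB : 0 < B) :
    ∃ ε δ : ℝ, 0 < ε ∧ 0 < δ ∧
      ∀ {α : Type*} [MeasurableSpace α] (μ : Measure α) (f : α → E),
        AEStronglyMeasurable f μ →
        ENNReal.ofReal c ≤ eLpNorm f (ENNReal.ofReal q) μ →
        eLpNorm f (ENNReal.ofReal p) μ ≤ ENNReal.ofReal A →
        eLpNorm f (ENNReal.ofReal r) μ ≤ ENNReal.ofReal B →
        ENNReal.ofReal δ ≤ μ {x | ENNReal.ofReal ε < ‖f x‖ₑ} := by
  set ε := (c ^ q / (4 * A ^ p)) ^ (q - p)⁻¹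
  set M := (c ^ q / (4 * B ^ r)) ^ (q - r)⁻¹
  have hε : 0 < ε := by positivity
  have hM : 0 < M := by positivity
  have hεA : ε ^ (q - p) * A ^ p = c ^ q / 4 := by
    rw [Real.rpow_inv_rpow (by positivity) (by linarith)]
    field_simp
  have hMB : M ^ (q - r) * B ^ r = c ^ q / 4 := by
    rw [Real.rpow_inv_rpow (by positivity) (by linarith)]
    field_simp
  refine ⟨ε, c ^ q / 2 / M ^ q, hε, by positivity, fun μ f hf hfq hfp hfr ↦ ?_⟩
  set S := {x | ENNReal.ofReal ε < ‖f x‖ₑ}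
  have hlow : ENNReal.ofReal (ε ^ (q - p)) * ∫⁻ x, ‖f x‖ₑ ^ p ∂μ ≤ ENNReal.ofReal (c ^ q / 4) := by
    rw [← hεA, ENNReal.ofReal_mul (by positivity)]
    gcongr
    exact lintegral_enorm_rpow_le_of_eLpNorm_le hp hA.le hfp
  have hhigh : ENNReal.ofReal (M ^ (q - r)) * ∫⁻ x, ‖f x‖ₑ ^ r ∂μ ≤ ENNReal.ofReal (c ^ q / 4) := by
    rw [← hMB, ENNReal.ofReal_mul (by positivity)]
    gcongr
    exact lintegral_enorm_rpow_le_of_eLpNorm_le (hp.trans (hpq.trans hqr)) hB.le hfr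
  have key : ENNReal.ofReal (c ^ q / 2) + ENNReal.ofReal (c ^ q / 2)
      ≤ ENNReal.ofReal (M ^ q) * μ S + ENNReal.ofReal (c ^ q / 2) :=
    calc ENNReal.ofReal (c ^ q / 2) + ENNReal.ofReal (c ^ q / 2) = ENNReal.ofReal (c ^ q) := by
          rw [← ENNReal.ofReal_add (by positivity) (by positivity), add_halves]
      _ ≤ ∫⁻ x, ‖f x‖ₑ ^ q ∂μ :=
          le_lintegral_enorm_rpow_of_le_eLpNorm (hp.trans hpq) (by positivity) hfq
      _ ≤ _ := lintegral_rpow_le_three_regimes hp hpq hqr hε hM hf.enorm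
      _ ≤ ENNReal.ofReal (c ^ q / 4) + ENNReal.ofReal (M ^ q) * μ S
            + ENNReal.ofReal (c ^ q / 4) := by gcongr
      _ = ENNReal.ofReal (M ^ q) * μ S + ENNReal.ofReal (c ^ q / 2) := by
          rw [add_comm (ENNReal.ofReal _), add_assoc,
            ← ENNReal.ofReal_add (by positivity) (by positivity)]
          ring_nf
  rw [ENNReal.ofReal_div_of_pos (by positivity)]
  exact ENNReal.div_le_of_le_mul
    ((ENNReal.add_le_add_iff_right ENNReal.ofReal_ne_top).mp key |>.trans_eq (mul_comm _ _))

theorem stmt_15 (q c A : ℝ) (hq1 : 1 < q) (hq2 : q < 2) (hc : 0 < c) (hA : 0 < A) :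
    ∃ ε δ : ℝ, 0 < ε ∧ 0 < δ ∧
      ∀ f : EuclideanSpace ℝ (Fin 3) → ℝ,
        Measurable f → (∀ p, 0 ≤ f p) →
        ENNReal.ofReal c ≤ eLpNorm f (ENNReal.ofReal q) volume →
        eLpNorm f 1 volume ≤ ENNReal.ofReal A →
        eLpNorm f 2 volume ≤ ENNReal.ofReal A →
        ENNReal.ofReal δ ≤ volume {p | ε < f p} := by
  obtain ⟨ε, δ, hε, hδ, h⟩ :=
    exists_pos_le_measure_lt_enorm (E := ℝ) one_pos hq1 hq2 hc hA hA
  refine ⟨ε, δ, hε, hδ, fun f hf hf0 hfq hf1 hf2 ↦ ?_⟩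
  have hS : {p | ε < f p} = {p | ENNReal.ofReal ε < ‖f p‖ₑ} := by
    ext p
    simp only [Set.mem_ofPred_eq, Real.enorm_eq_ofReal (hf0 p), ENNReal.ofReal_lt_ofReal_iff']
    exact ⟨fun h ↦ ⟨h, hε.trans h⟩, And.left⟩
  rw [hS]
  exact h volume f hf.aestronglyMeasurable hfq (by simpa using hf1) (by simpa using hf2)
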